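/- Let (Ω, F, P) be a probability space, (F_n) a filtration, and (V_n) a nonnegative adapted process satisfying E[V_{n+1} | F_n] ≤ V_n + ε_n, where (ε_n) are nonnegative F_n-measurable random variables with E[∑_{n} ε_n] < ∞. Then V_n converges almost surely to a finite random limit. -/

import Mathlib

/-!
With `S n = ε 0 + ⋯ + ε (n - 1)`, the process `S n - V n` is a submartingale because `S (n + 1)`
is already `ℱ n`-measurable. It is bounded above by `S n`, whose expectations are bounded by
`∑ E[ε n]`, so it is bounded in `L¹` and converges a.s. by Doob's theorem. Finally `S n` converges
a.s. since `∑ ε n` has finite expectation, hence `V n = S n - (S n - V n)` converges too.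
-/

open MeasureTheory Filter

section

variable {X : Type*} {_ : MeasurableSpace X} {μ : Measure X}

lemma eLpNorm_one_eq_ofReal_integral_norm {E : Type*} [NormedAddCommGroup E] {f : X → E}
    (hf : Integrable f μ) : eLpNorm f 1 μ = ENNReal.ofReal (∫ x, ‖f x‖ ∂μ) := by
  rw [eLpNorm_one_eq_lintegral_enorm, ofReal_integral_norm_eq_lintegral_enorm hf]

lemma ae_summable_of_summable_integral {ι : Type*} [Countable ι] {f : ι → X → ℝ}
    (hf_nonneg : ∀ i, 0 ≤ᵐ[μ] f i) (hf_int : ∀ i, Integrable (f i) μ)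
    (hsum : Summable fun i => ∫ x, f i x ∂μ) :
    ∀ᵐ x ∂μ, Summable fun i => f i x := by
  have hnorm : ∀ i, ∫ x, ‖f i x‖ ∂μ = ∫ x, f i x ∂μ := fun i =>
    integral_congr_ae <| (hf_nonneg i).mono fun x hx => Real.norm_of_nonneg hx
  have htsum : ∑' i, eLpNorm (f i) 1 μ ≠ ⊤ := by
    simp only [eLpNorm_one_eq_ofReal_integral_norm (hf_int _), hnorm]
    rw [← ENNReal.ofReal_tsum_of_nonneg (fun i => integral_nonneg_of_ae (hf_nonneg i)) hsum]
    exact ENNReal.ofReal_ne_top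
  filter_upwards [summable_norm_of_tsum_eLpNorm_ne_top le_rfl
    (fun i => (hf_int i).aestronglyMeasurable) htsum] with x hx
  exact hx.of_norm

end

namespace MeasureTheory.Submartingale

variable {Ω : Type*} {m0 : MeasurableSpace Ω} {μ : Measure Ω} {ℱ : Filtration ℕ m0}

lemma integral_abs_le_of_le [IsFiniteMeasure μ] {f g : ℕ → Ω → ℝ}
    (hf : Submartingale f ℱ μ) (hfg : ∀ n, f n ≤ᵐ[μ] g n) (hg_nonneg : ∀ n, 0 ≤ᵐ[μ] g n)
    (hg_int : ∀ n, Integrable (g n) μ) (n : ℕ) :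
    ∫ ω, |f n ω| ∂μ ≤ 2 * ∫ ω, g n ω ∂μ - ∫ ω, f 0 ω ∂μ := by
  have habs : ∀ᵐ ω ∂μ, |f n ω| ≤ 2 * g n ω - f n ω := by
    filter_upwards [hfg n, hg_nonneg n] with ω hfgω hgω
    rw [Pi.zero_apply] at hgω
    exact abs_le.2 ⟨by linarith, by linarith⟩
  have hmono : ∫ ω, f 0 ω ∂μ ≤ ∫ ω, f n ω ∂μ := by
    simpa only [setIntegral_univ] using hf.setIntegral_le (Nat.zero_le n) MeasurableSet.univ
  calc ∫ ω, |f n ω| ∂μ ≤ ∫ ω, (2 * g n ω - f n ω) ∂μ :=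
        integral_mono_ae (hf.integrable n).abs (((hg_int n).const_mul 2).sub (hf.integrable n))
          habs
    _ = 2 * ∫ ω, g n ω ∂μ - ∫ ω, f n ω ∂μ := by
        rw [integral_sub ((hg_int n).const_mul 2) (hf.integrable n), integral_const_mul]
    _ ≤ 2 * ∫ ω, g n ω ∂μ - ∫ ω, f 0 ω ∂μ := by linarith

lemma exists_ae_tendsto_of_le [IsFiniteMeasure μ] {f g : ℕ → Ω → ℝ} {C : ℝ}
    (hf : Submartingale f ℱ μ) (hfg : ∀ n, f n ≤ᵐ[μ] g n) (hg_nonneg : ∀ n, 0 ≤ᵐ[μ] g n)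
    (hg_int : ∀ n, Integrable (g n) μ) (hC : ∀ n, ∫ ω, g n ω ∂μ ≤ C) :
    ∀ᵐ ω ∂μ, ∃ c, Tendsto (fun n => f n ω) atTop (nhds c) := by
  refine hf.exists_ae_tendsto_of_bdd (R := (2 * C - ∫ ω, f 0 ω ∂μ).toNNReal) fun n => ?_
  rw [eLpNorm_one_eq_ofReal_integral_norm (hf.integrable n)]
  simp only [Real.norm_eq_abs]
  refine ENNReal.ofReal_le_ofReal ?_
  linarith [hf.integral_abs_le_of_le hfg hg_nonneg hg_int n, hC n]

end MeasureTheory.Submartingale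

section

open Finset

variable {Ω : Type*} {m0 : MeasurableSpace Ω} {μ : Measure Ω} {ℱ : Filtration ℕ m0}

lemma submartingale_sum_range_sub [IsFiniteMeasure μ] {V ε : ℕ → Ω → ℝ}
    (hV : StronglyAdapted ℱ V) (hV_int : ∀ n, Integrable (V n) μ)
    (hε : StronglyAdapted ℱ ε) (hε_int : ∀ n, Integrable (ε n) μ)
    (hsupermart : ∀ n, μ[V (n + 1) | ℱ n] ≤ᵐ[μ] V n + ε n) :
    Submartingale (fun n => (∑ k ∈ range n, ε k) - V n) ℱ μ := by
  have hS_adapted : StronglyAdapted ℱ fun n => ∑ k ∈ range n, ε k := fun n =>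
    Finset.stronglyMeasurable_sum _ fun k hk => hε.stronglyMeasurable_le (mem_range.1 hk).le
  have hS_predictable : ∀ n, StronglyMeasurable[ℱ n] (∑ k ∈ range (n + 1), ε k) := fun n =>
    Finset.stronglyMeasurable_sum _ fun k hk =>
      hε.stronglyMeasurable_le (Nat.lt_succ_iff.1 (mem_range.1 hk))
  have hS_int : ∀ n, Integrable (∑ k ∈ range n, ε k) μ := fun n =>
    integrable_finsetSum' _ fun k _ => hε_int k
  refine submartingale_nat (hS_adapted.sub hV) (fun n => (hS_int n).sub (hV_int n)) fun n => ?_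
  have hcond : μ[(∑ k ∈ range (n + 1), ε k) - V (n + 1) | ℱ n]
      =ᵐ[μ] (∑ k ∈ range (n + 1), ε k) - μ[V (n + 1) | ℱ n] := by
    have h := condExp_sub (m := ℱ n) (hS_int (n + 1)) (hV_int (n + 1))
    rwa [condExp_of_stronglyMeasurable (ℱ.le n) (hS_predictable n) (hS_int (n + 1))] at h
  filter_upwards [hcond, hsupermart n] with ω hcondω hω
  rw [hcondω]
  simp only [Pi.sub_apply, Pi.add_apply, Finset.sum_apply, sum_range_succ] at hω ⊢
  linarith

end

theorem almost_supermartingale_convergence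
    {Ω : Type*} {m0 : MeasurableSpace Ω} {μ : Measure Ω} [IsProbabilityMeasure μ]
    (ℱ : Filtration ℕ m0) (V ε : ℕ → Ω → ℝ)
    (hV_adapted : Adapted ℱ V)
    (hV_nonneg : ∀ n ω, 0 ≤ V n ω)
    (hV_int : ∀ n, Integrable (V n) μ)
    (hε_meas : ∀ n, StronglyMeasurable[ℱ n] (ε n))
    (hε_nonneg : ∀ n ω, 0 ≤ ε n ω)
    (hε_int : ∀ n, Integrable (ε n) μ)
    (hε_sum : Summable fun n => ∫ ω, ε n ω ∂μ)
    (hsupermart : ∀ n, μ[V (n + 1) | ℱ n] ≤ᵐ[μ] V n + ε n) :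
    ∀ᵐ ω ∂μ, ∃ l : ℝ, Tendsto (fun n => V n ω) atTop (nhds l) := by
  have hsub := submartingale_sum_range_sub hV_adapted.stronglyAdapted hV_int hε_meas hε_int
    hsupermart
  have hS_nonneg : ∀ n, 0 ≤ᵐ[μ] ∑ k ∈ Finset.range n, ε k := fun n =>
    ae_of_all _ fun ω => by simpa using Finset.sum_nonneg fun k _ => hε_nonneg k ω
  have hS_int : ∀ n, Integrable (∑ k ∈ Finset.range n, ε k) μ := fun n =>
    integrable_finsetSum' _ fun k _ => hε_int k
  have hS_le : ∀ n, ∫ ω, (∑ k ∈ Finset.range n, ε k) ω ∂μ ≤ ∑' k, ∫ ω, ε k ω ∂μ := fun n => by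
    simp only [Finset.sum_apply]
    rw [integral_finsetSum _ fun k _ => hε_int k]
    exact hε_sum.sum_le_tsum _ fun k _ => integral_nonneg (hε_nonneg k)
  have hconv := hsub.exists_ae_tendsto_of_le
    (fun n => ae_of_all _ fun ω => by simp [hV_nonneg n ω]) hS_nonneg hS_int hS_le
  filter_upwards [hconv, ae_summable_of_summable_integral (fun n => ae_of_all _ (hε_nonneg n))
    hε_int hε_sum] with ω ⟨c, hc⟩ hε_summable
  refine ⟨∑' n, ε n ω - c, ((hε_summable.hasSum.tendsto_sum_nat.sub hc).congr fun n => ?_)⟩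
  simp
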